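/- arXiv:2303.03014 — 5 statements merged into one kernel-verified Lean document; each statement's English description precedes it below -/
import Mathlib

section
/- Let M, p, q be natural numbers, F ∈ ℂ^{M×p}, G ∈ ℂ^{M×q}, H ∈ ℂ^{p×q}, and r ∈ ℂ^M. Then ‖H + Fᴴ diag(r) G‖_F² = ‖H‖_F² + rᴴ((FFᴴ) ⊙ (GGᴴ)*) r + 2 Re(rᴴ w), where w ∈ ℂ^M is the vector with entries w_m = (F H Gᴴ)_{mm}. -/
/-!
Write `B = Fᴴ diag(r) G` and express every squared Frobenius norm as a trace, `‖A‖_F² = tr(Aᴴ A)`.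
Expanding `tr((H + B)ᴴ (H + B))` gives `‖H‖_F² + tr(Bᴴ B) + 2 Re tr(Bᴴ H)`. By cyclicity of the
trace, `tr(Bᴴ B) = tr(diag(r̄) (F Fᴴ) diag(r) (G Gᴴ))`, which is the Hadamard quadratic form because
`G Gᴴ` is Hermitian, so its transpose is its entrywise conjugate; and
`tr(Bᴴ H) = tr(diag(r̄) F H Gᴴ) = rᴴ w`.
-/

open Matrix

namespace Matrix

section RCLike

variable {m n 𝕜 : Type*} [Fintype m] [Fintype n] [RCLike 𝕜]

theorem ofReal_sum_norm_sq_eq_trace (A : Matrix m n 𝕜) :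
    ((∑ i, ∑ j, ‖A i j‖ ^ 2 : ℝ) : 𝕜) = trace (Aᴴ * A) := by
  rw [trace, Finset.sum_comm]
  push_cast
  simp [mul_apply, RCLike.conj_mul]

theorem trace_conjTranspose_mul_self_add (A B : Matrix m n 𝕜) :
    trace ((A + B)ᴴ * (A + B))
      = trace (Aᴴ * A) + trace (Bᴴ * B) + 2 * RCLike.re (trace (Bᴴ * A)) := by
  have hconj : trace (Aᴴ * B) = starRingEnd 𝕜 (trace (Bᴴ * A)) := by
    rw [starRingEnd_apply, ← trace_conjTranspose, conjTranspose_mul, conjTranspose_conjTranspose]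
  rw [← RCLike.add_conj, ← hconj, conjTranspose_add, Matrix.add_mul, Matrix.mul_add,
    Matrix.mul_add]
  simp only [trace_add]
  ring

end RCLike

section CommRing

variable {m n l R : Type*} [Fintype m] [Fintype n] [Fintype l] [DecidableEq m] [CommRing R]

theorem trace_diagonal_mul (v : m → R) (A : Matrix m m R) :
    trace (diagonal v * A) = v ⬝ᵥ diag A := by
  simp [trace, dotProduct, diagonal_mul]

variable [StarRing R]

theorem trace_conjTranspose_mul_self_conjTranspose_mul_diagonal_mul
    (F : Matrix m n R) (G : Matrix m l R) (r : m → R) :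
    trace ((Fᴴ * diagonal r * G)ᴴ * (Fᴴ * diagonal r * G))
      = star r ⬝ᵥ ((F * Fᴴ) ⊙ (G * Gᴴ).map star) *ᵥ r := by
  have hGG : ((G * Gᴴ).map star)ᵀ = G * Gᴴ := by
    rw [← transpose_map, ← conjTranspose, conjTranspose_mul, conjTranspose_conjTranspose]
  rw [dotProduct_mulVec, dotProduct_vecMul_hadamard, transpose_mul, hGG, diagonal_transpose,
    conjTranspose_mul, conjTranspose_mul, conjTranspose_conjTranspose, diagonal_conjTranspose]
  simp only [Matrix.mul_assoc]
  rw [trace_mul_comm]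
  simp only [Matrix.mul_assoc]

theorem trace_conjTranspose_conjTranspose_mul_diagonal_mul_mul
    (F : Matrix m n R) (G : Matrix m l R) (H : Matrix n l R) (r : m → R) :
    trace ((Fᴴ * diagonal r * G)ᴴ * H) = star r ⬝ᵥ diag (F * H * Gᴴ) := by
  rw [conjTranspose_mul, conjTranspose_mul, conjTranspose_conjTranspose, diagonal_conjTranspose]
  simp only [Matrix.mul_assoc]
  rw [trace_mul_comm]
  simp only [Matrix.mul_assoc]
  exact trace_diagonal_mul _ _

end CommRing

end Matrix

/-- Frobenius-norm expansion of the interference leakage for a single link: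
`‖H + Fᴴ diag(r) G‖_F² = ‖H‖_F² + rᴴ((FFᴴ) ⊙ (GGᴴ)*) r + 2 Re(rᴴ w)`,
where `w m = (F H Gᴴ) m m`. -/
theorem frobenius_expansion (M p q : ℕ)
    (F : Matrix (Fin M) (Fin p) ℂ) (G : Matrix (Fin M) (Fin q) ℂ)
    (H : Matrix (Fin p) (Fin q) ℂ) (r : Fin M → ℂ)
    (w : Fin M → ℂ) (hw : ∀ m, w m = (F * H * Gᴴ) m m) :
    ((∑ i, ∑ j, ‖(H + Fᴴ * Matrix.diagonal r * G) i j‖ ^ 2 : ℝ) : ℂ)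
      = ((∑ i, ∑ j, ‖H i j‖ ^ 2 : ℝ) : ℂ)
        + star r ⬝ᵥ (Matrix.hadamard (F * Fᴴ) ((G * Gᴴ).map (starRingEnd ℂ))).mulVec r
        + 2 * ((star r ⬝ᵥ w).re : ℂ) := by
  have hw' : w = diag (F * H * Gᴴ) := funext hw
  have hnorm : ∀ {a b : ℕ} (A : Matrix (Fin a) (Fin b) ℂ),
      ((∑ i, ∑ j, ‖A i j‖ ^ 2 : ℝ) : ℂ) = trace (Aᴴ * A) := ofReal_sum_norm_sq_eq_trace
  rw [hnorm, hnorm, trace_conjTranspose_mul_self_add,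
    trace_conjTranspose_mul_self_conjTranspose_mul_diagonal_mul,
    trace_conjTranspose_conjTranspose_mul_diagonal_mul_mul, hw']
  -- `RCLike.re`, `RCLike.ofReal` and `map star` on `ℂ` unfold to `Complex.re`, `Complex.ofReal`
  -- and `map (starRingEnd ℂ)`.
  rfl
end

section
/- Fix K, M ∈ ℕ and d : Fin K → ℕ; for each k let F̄ₖ ∈ ℂ^{M×d_k}, Ḡₖ ∈ ℂ^{M×d_k}, and for each ordered pair (l,k) with l ≠ k let H̄_{lk} ∈ ℂ^{d_k×d_l}. Then for every r ∈ ℂ^M, IL(r) = t + rᴴ Σ r + 2 Re(rᴴ s), where IL(r) = Σ_{l≠k} ‖H̄_{lk} + F̄ₖᴴ diag(r) Ḡₗ‖_F², t = Σ_{l≠k} ‖H̄_{lk}‖_F², Σ = Σ_{l≠k} (F̄ₖF̄ₖᴴ) ⊙ (ḠₗḠₗᴴ)*, and s ∈ ℂ^M has entries s_m = Σ_{l≠k} (F̄ₖ H̄_{lk} Ḡₗᴴ)_{mm}. -/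
open Matrix

lemma IL_sum4_rev {α β γ δ R : Type*} [Fintype α] [Fintype β] [Fintype γ] [Fintype δ]
    [AddCommMonoid R] (f : α → β → γ → δ → R) :
    ∑ a, ∑ b, ∑ c, ∑ d, f a b c d = ∑ d, ∑ c, ∑ b, ∑ a, f a b c d := by
  conv_lhs => enter [2, a, 2, b]; rw [Finset.sum_comm]
  conv_lhs => enter [2, a]; rw [Finset.sum_comm]
  rw [Finset.sum_comm]
  conv_lhs => enter [2, d, 2, a]; rw [Finset.sum_comm]
  conv_lhs => enter [2, d]; rw [Finset.sum_comm]
  conv_lhs => enter [2, d, 2, c]; rw [Finset.sum_comm]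

lemma IL_Bapply {M dk dl : ℕ}
    (F : Matrix (Fin M) (Fin dk) ℂ) (G : Matrix (Fin M) (Fin dl) ℂ)
    (r : Fin M → ℂ) (i : Fin dk) (j : Fin dl) :
    (Fᴴ * Matrix.diagonal r * G) i j = ∑ m, star (F m i) * (r m * G m j) := by
  rw [Matrix.mul_assoc, Matrix.mul_apply]
  simp [Matrix.diagonal_mul, Matrix.conjTranspose_apply]

lemma IL_cross {M dk dl : ℕ}
    (F : Matrix (Fin M) (Fin dk) ℂ) (G : Matrix (Fin M) (Fin dl) ℂ)
    (H : Matrix (Fin dk) (Fin dl) ℂ) (r : Fin M → ℂ) :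
    star r ⬝ᵥ (fun m => (F * H * Gᴴ) m m)
      = ∑ i, ∑ j, H i j * star ((Fᴴ * Matrix.diagonal r * G) i j) := by
  simp only [IL_Bapply]
  simp only [dotProduct, Matrix.mul_apply, conjTranspose_apply,
    Pi.star_apply, star_sum, star_mul', star_star, Finset.mul_sum, Finset.sum_mul]
  conv_lhs => rw [Finset.sum_comm]
  conv_rhs => rw [Finset.sum_comm]
  refine Finset.sum_congr rfl fun j _ => ?_
  conv_lhs => rw [Finset.sum_comm]
  exact Finset.sum_congr rfl fun i _ => Finset.sum_congr rfl fun m _ => by ring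

lemma IL_quad {M dk dl : ℕ}
    (F : Matrix (Fin M) (Fin dk) ℂ) (G : Matrix (Fin M) (Fin dl) ℂ)
    (r : Fin M → ℂ) :
    star r ⬝ᵥ (Matrix.hadamard (F * Fᴴ) ((G * Gᴴ).map (starRingEnd ℂ))).mulVec r
      = ∑ i, ∑ j, (Fᴴ * Matrix.diagonal r * G) i j
          * star ((Fᴴ * Matrix.diagonal r * G) i j) := by
  simp only [IL_Bapply]
  simp only [dotProduct, Matrix.mulVec, Matrix.hadamard_apply, Matrix.map_apply,
    Matrix.mul_apply, conjTranspose_apply, Pi.star_apply, star_sum, star_mul',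
    star_star, Finset.mul_sum, Finset.sum_mul, RingHom.coe_coe,
    starRingEnd_apply, map_sum]
  conv_rhs => rw [IL_sum4_rev]
  conv_rhs => rw [Finset.sum_comm]
  refine Finset.sum_congr rfl fun m _ => Finset.sum_congr rfl fun n _ =>
    Finset.sum_congr rfl fun j _ => Finset.sum_congr rfl fun i _ => by ring

lemma IL_keyz (z : ℂ) : ((‖z‖ : ℝ) : ℂ) ^ 2 = z * star z := by
  rw [← Complex.mul_conj']
  rfl

lemma IL_pair {M dk dl : ℕ}
    (F : Matrix (Fin M) (Fin dk) ℂ) (G : Matrix (Fin M) (Fin dl) ℂ)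
    (H : Matrix (Fin dk) (Fin dl) ℂ) (r : Fin M → ℂ) :
    ((∑ i, ∑ j, ‖(H + Fᴴ * Matrix.diagonal r * G) i j‖ ^ 2 : ℝ) : ℂ)
      = ((∑ i, ∑ j, ‖H i j‖ ^ 2 : ℝ) : ℂ)
        + star r ⬝ᵥ (Matrix.hadamard (F * Fᴴ) ((G * Gᴴ).map (starRingEnd ℂ))).mulVec r
        + (star r ⬝ᵥ (fun m => (F * H * Gᴴ) m m))
        + star (star r ⬝ᵥ (fun m => (F * H * Gᴴ) m m)) := by
  rw [IL_quad, IL_cross]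
  push_cast
  simp only [IL_keyz, Matrix.add_apply, star_add, star_sum, star_mul', star_star]
  simp only [← Finset.sum_add_distrib]
  exact Finset.sum_congr rfl fun i _ => Finset.sum_congr rfl fun j _ => by ring

/-- `A ↦ rᴴ A r` as an additive monoid hom. -/
noncomputable def IL_quadForm {M : ℕ} (r : Fin M → ℂ) :
    Matrix (Fin M) (Fin M) ℂ →+ ℂ where
  toFun A := star r ⬝ᵥ A.mulVec r
  map_zero' := by simp
  map_add' A B := by simp [Matrix.add_mulVec, dotProduct_add]

/-- `v ↦ rᴴ v` as an additive monoid hom. -/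
noncomputable def IL_dotForm {M : ℕ} (r : Fin M → ℂ) : (Fin M → ℂ) →+ ℂ where
  toFun v := star r ⬝ᵥ v
  map_zero' := by simp
  map_add' A B := by simp [dotProduct_add]

/-- Expansion of the total interference leakage in a RIS-assisted `K`-user MIMO IC:
`IL(r) = t + rᴴ Σ r + 2 Re(rᴴ s)`. -/
theorem IL_expansion (K M : ℕ) (d : Fin K → ℕ)
    (F : (k : Fin K) → Matrix (Fin M) (Fin (d k)) ℂ)
    (G : (k : Fin K) → Matrix (Fin M) (Fin (d k)) ℂ)
    (H : (l k : Fin K) → Matrix (Fin (d k)) (Fin (d l)) ℂ)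
    (r : Fin M → ℂ)
    (Sig : Matrix (Fin M) (Fin M) ℂ)
    (hSig : Sig = ∑ l, ∑ k, if l ≠ k then
      Matrix.hadamard (F k * (F k)ᴴ) ((G l * (G l)ᴴ).map (starRingEnd ℂ)) else 0)
    (s : Fin M → ℂ)
    (hs : ∀ m, s m = ∑ l, ∑ k, if l ≠ k then (F k * H l k * (G l)ᴴ) m m else 0) :
    ((∑ l, ∑ k, if l ≠ k then
        ∑ i, ∑ j, ‖(H l k + (F k)ᴴ * Matrix.diagonal r * G l) i j‖ ^ 2 else 0 : ℝ) : ℂ)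
      = ((∑ l, ∑ k, if l ≠ k then ∑ i, ∑ j, ‖(H l k) i j‖ ^ 2 else 0 : ℝ) : ℂ)
        + star r ⬝ᵥ Sig.mulVec r + 2 * ((star r ⬝ᵥ s).re : ℂ) := by
  have h1 : star r ⬝ᵥ Sig.mulVec r = ∑ l, ∑ k, if l ≠ k then
      star r ⬝ᵥ (Matrix.hadamard (F k * (F k)ᴴ)
        ((G l * (G l)ᴴ).map (starRingEnd ℂ))).mulVec r else 0 := by
    have h0 : star r ⬝ᵥ Sig.mulVec r = IL_quadForm r Sig := rfl
    rw [h0, hSig, map_sum]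
    refine Finset.sum_congr rfl fun l _ => ?_
    rw [map_sum]
    refine Finset.sum_congr rfl fun k _ => ?_
    rw [apply_ite (IL_quadForm r), map_zero]
    rfl
  have hsf : s = ∑ l, ∑ k, if l ≠ k then
      (fun m => (F k * H l k * (G l)ᴴ) m m) else 0 := by
    funext m
    rw [hs m]
    simp [Finset.sum_apply, ite_apply]
  have h2 : star r ⬝ᵥ s = ∑ l, ∑ k, if l ≠ k then
      star r ⬝ᵥ (fun m => (F k * H l k * (G l)ᴴ) m m) else 0 := by
    have h0 : star r ⬝ᵥ s = IL_dotForm r s := rfl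
    rw [h0, hsf, map_sum]
    refine Finset.sum_congr rfl fun l _ => ?_
    rw [map_sum]
    refine Finset.sum_congr rfl fun k _ => ?_
    rw [apply_ite (IL_dotForm r), map_zero]
    rfl
  have h3 : 2 * ((star r ⬝ᵥ s).re : ℂ) = star r ⬝ᵥ s + star (star r ⬝ᵥ s) := by
    have h4 := Complex.add_conj (star r ⬝ᵥ s)
    push_cast at h4
    rw [← h4]
    rfl
  rw [h3, h1, h2]
  simp only [star_sum, apply_ite (star : ℂ → ℂ), star_zero]
  push_cast
  simp only [← Finset.sum_add_distrib]
  refine Finset.sum_congr rfl fun l _ => Finset.sum_congr rfl fun k _ => ?_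
  by_cases hlk : l ≠ k
  · simp only [if_pos hlk]
    have hp := IL_pair (F k) (G l) (H l k) r
    push_cast at hp ⊢
    linear_combination hp
  · simp [hlk]
end

section
/- Fix K, M ∈ ℕ and d : Fin K → ℕ; for each k let F̄ₖ ∈ ℂ^{M×d_k}, Ḡₖ ∈ ℂ^{M×d_k}, and for each ordered pair (l,k) with l ≠ k let H̄_{lk} ∈ ℂ^{d_k×d_l}. Define Σ = Σ_{l≠k} (F̄ₖF̄ₖᴴ) ⊙ (ḠₗḠₗᴴ)* and s ∈ ℂ^M with s_m = Σ_{l≠k} (F̄ₖ H̄_{lk} Ḡₗᴴ)_{mm}. Then s lies in the column space of Σ; that is, there exists x ∈ ℂ^M with Σ.mulVec x = s. -/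
/-!
Each summand `(Fₖ Fₖᴴ) ⊙ (Gₗ Gₗᴴ)*` is the Gram matrix `B Bᴴ` of the face-splitting product `B`
of `Fₖ` and `Gₗ*` (row `m` of `B` is the Kronecker product of row `m` of `Fₖ` and of `Gₗ*`), and
the diagonal of `Fₖ Hₗₖ Gₗᴴ` is `B vec(Hₗₖ)`. Placing these blocks side by side gives one matrix
`B` with `Σ = B Bᴴ` and `s = B h`, and `B Bᴴ` has the same column space as `B` because it has the
same rank.
-/

open Matrix

theorem Finset.sum_sum_ite_ne {ι α : Type*} [Fintype ι] [DecidableEq ι] [AddCommMonoid α]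
    (f : ι → ι → α) :
    ∑ i, ∑ j, (if i ≠ j then f i j else 0) = ∑ p ∈ Finset.univ.offDiag, f p.1 p.2 := by
  rw [← Fintype.sum_prod_type (fun p => if p.1 ≠ p.2 then f p.1 p.2 else 0), ← Finset.sum_filter]
  congr 1
  ext
  simp

namespace Matrix

section FaceSplitting

variable {m p q R : Type*} [Fintype p] [Fintype q] [CommSemiring R] [StarRing R]

def faceSplitConj (F : Matrix m p R) (G : Matrix m q R) : Matrix m (p × q) R :=
  of fun a ij => F a ij.1 * star (G a ij.2)

theorem faceSplitConj_mul_conjTranspose (F : Matrix m p R) (G : Matrix m q R) :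
    faceSplitConj F G * (faceSplitConj F G)ᴴ = (F * Fᴴ) ⊙ (G * Gᴴ).map (starRingEnd R) := by
  ext a b
  simp only [faceSplitConj, mul_apply, hadamard_apply, map_apply, conjTranspose_apply, of_apply,
    Fintype.sum_prod_type, map_sum, Finset.sum_mul_sum, star_mul', star_star, starRingEnd_apply]
  exact Finset.sum_congr rfl fun i _ => Finset.sum_congr rfl fun j _ => by ring

theorem faceSplitConj_mulVec (F : Matrix m p R) (G : Matrix m q R) (H : Matrix p q R) (a : m) :
    (faceSplitConj F G *ᵥ fun ij => H ij.1 ij.2) a = (F * H * Gᴴ) a a := by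
  simp only [faceSplitConj, mulVec, dotProduct, mul_apply, of_apply, conjTranspose_apply,
    Fintype.sum_prod_type, Finset.sum_mul]
  rw [Finset.sum_comm]
  exact Finset.sum_congr rfl fun i _ => Finset.sum_congr rfl fun j _ => by ring

end FaceSplitting

section ConcatCols

variable {m ι R : Type*} {n : ι → Type*} [Fintype ι] [∀ i, Fintype (n i)] [CommSemiring R]

def concatCols (A : (i : ι) → Matrix m (n i) R) : Matrix m (Σ i, n i) R :=
  of fun a p => A p.1 a p.2

theorem concatCols_mul_conjTranspose [StarRing R] (A : (i : ι) → Matrix m (n i) R) :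
    concatCols A * (concatCols A)ᴴ = ∑ i, A i * (A i)ᴴ := by
  ext a b
  simp [concatCols, mul_apply, Fintype.sum_sigma, Matrix.sum_apply]

theorem concatCols_mulVec (A : (i : ι) → Matrix m (n i) R) (v : (Σ i, n i) → R) :
    concatCols A *ᵥ v = ∑ i, A i *ᵥ fun j => v ⟨i, j⟩ := by
  ext a
  simp [concatCols, mulVec, dotProduct, Fintype.sum_sigma, Finset.sum_apply]

end ConcatCols

section StarOrderedField

variable {m R : Type*} [Fintype m] [Field R] [PartialOrder R] [StarRing R] [StarOrderedRing R]

theorem range_mulVecLin_self_mul_conjTranspose {n : Type*} [Fintype n] (A : Matrix m n R) :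
    LinearMap.range (A * Aᴴ).mulVecLin = LinearMap.range A.mulVecLin := by
  refine Submodule.eq_of_le_of_finrank_eq ?_ (rank_self_mul_conjTranspose A)
  rw [mulVecLin_mul]
  exact LinearMap.range_comp_le_range _ _

theorem sum_mulVec_mem_range_sum_mul_conjTranspose {ι : Type*} {n : ι → Type*}
    [∀ i, Fintype (n i)] (t : Finset ι) (A : (i : ι) → Matrix m (n i) R)
    (v : (i : ι) → n i → R) :
    ∑ i ∈ t, A i *ᵥ v i ∈ LinearMap.range (∑ i ∈ t, A i * (A i)ᴴ).mulVecLin := by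
  have h := (range_mulVecLin_self_mul_conjTranspose (concatCols fun i : t => A i)).ge
    (LinearMap.mem_range_self _ fun p => v p.1 p.2)
  rwa [concatCols_mul_conjTranspose, mulVecLin_apply, concatCols_mulVec,
    Finset.sum_coe_sort t (fun i => A i * (A i)ᴴ),
    Finset.sum_coe_sort t (fun i => A i *ᵥ v i)] at h

end StarOrderedField

end Matrix

/-- The vector `s`, with `s m = Σ_{l≠k} (F̄ₖ H̄_{lk} Ḡₗᴴ) m m`, lies in the column
space of `Σ = Σ_{l≠k} (F̄ₖF̄ₖᴴ) ⊙ (ḠₗḠₗᴴ)*`. -/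
theorem s_mem_colSpace (K M : ℕ) (d : Fin K → ℕ)
    (F : (k : Fin K) → Matrix (Fin M) (Fin (d k)) ℂ)
    (G : (k : Fin K) → Matrix (Fin M) (Fin (d k)) ℂ)
    (H : (l k : Fin K) → Matrix (Fin (d k)) (Fin (d l)) ℂ)
    (Sig : Matrix (Fin M) (Fin M) ℂ)
    (hSig : Sig = ∑ l, ∑ k, if l ≠ k then
      Matrix.hadamard (F k * (F k)ᴴ) ((G l * (G l)ᴴ).map (starRingEnd ℂ)) else 0)
    (s : Fin M → ℂ)
    (hs : ∀ m, s m = ∑ l, ∑ k, if l ≠ k then (F k * H l k * (G l)ᴴ) m m else 0) :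
    ∃ x : Fin M → ℂ, Sig.mulVec x = s := by
  set B : (p : Fin K × Fin K) → Matrix (Fin M) (Fin (d p.2) × Fin (d p.1)) ℂ :=
    fun p => faceSplitConj (F p.2) (G p.1)
  have hSig_gram : Sig = ∑ p ∈ Finset.univ.offDiag, B p * (B p)ᴴ := by
    simp only [hSig, B, faceSplitConj_mul_conjTranspose, Finset.sum_sum_ite_ne]
  have hs_image : s = ∑ p ∈ Finset.univ.offDiag, B p *ᵥ fun ij => H p.1 p.2 ij.1 ij.2 := by
    ext m
    simp only [hs, Finset.sum_apply, B, faceSplitConj_mulVec, Finset.sum_sum_ite_ne]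
  open scoped ComplexOrder in
  obtain ⟨x, hx⟩ :=
    sum_mulVec_mem_range_sum_mul_conjTranspose _ B fun p ij => H p.1 p.2 ij.1 ij.2
  exact ⟨x, by rw [hSig_gram, hs_image]; exact hx⟩
end

section
/- Fix K, M ∈ ℕ and d : Fin K → ℕ; for each k let F̄ₖ ∈ ℂ^{M×d_k}, Ḡₖ ∈ ℂ^{M×d_k}, and for each ordered pair (l,k) with l ≠ k let H̄_{lk} ∈ ℂ^{d_k×d_l}. Define IL(r) = Σ_{l≠k} ‖H̄_{lk} + F̄ₖᴴ diag(r) Ḡₗ‖_F² and Σ = Σ_{l≠k} (F̄ₖF̄ₖᴴ) ⊙ (ḠₗḠₗᴴ)*. Suppose r₀ ∈ ℂ^M satisfies IL(r₀) = 0. Then for any r ∈ ℂ^M, IL(r) = 0 if and only if star(u) ⬝ᵥ r = star(u) ⬝ᵥ r₀ for every u in the column space of Σ (i.e., every u of the form Σ.mulVec v). In particular, zero interference leakage depends only on the signal-subspace coordinates of r. -/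
/-!
Since `IL r₀ = 0`, every `H̄ₗₖ` with `l ≠ k` equals `-F̄ₖᴴ diag(r₀) Ḡₗ`, so with `x = r - r₀` the
leakage `IL r` is the sum of `‖F̄ₖᴴ diag(x) Ḡₗ‖_F²`, which is exactly the Hermitian form `xᴴ Σ x`.
By the Schur product theorem `Σ` is positive semidefinite, hence `xᴴ Σ x = 0` iff `Σ x = 0`, and
for Hermitian `Σ` this says that `x` is orthogonal to the column space of `Σ`.
-/

open Matrix
open scoped ComplexOrder

namespace Matrix

variable {𝕜 m n p : Type*} [RCLike 𝕜] [Fintype n] [Fintype p]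

theorem trace_conjTranspose_mul_self_eq_sum_norm_sq (N : Matrix n p 𝕜) :
    (Nᴴ * N).trace = ((∑ i, ∑ j, ‖N i j‖ ^ 2 : ℝ) : 𝕜) := by
  rw [Finset.sum_comm]
  push_cast
  simp [trace, mul_apply, RCLike.conj_mul]

theorem sum_sum_norm_sq_eq_zero_iff {N : Matrix n p 𝕜} :
    ∑ i, ∑ j, ‖N i j‖ ^ 2 = 0 ↔ N = 0 := by
  rw [← trace_conjTranspose_mul_self_eq_zero_iff, trace_conjTranspose_mul_self_eq_sum_norm_sq,
    RCLike.ofReal_eq_zero]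

theorem map_conj_mul_conjTranspose_self (B : Matrix m n 𝕜) :
    (B * Bᴴ).map (starRingEnd 𝕜) = (B * Bᴴ)ᵀ := by
  ext i j
  simp [mul_apply, mul_comm]

theorem posSemidef_hadamard_map_conj [Finite m] (A : Matrix m n 𝕜) (B : Matrix m p 𝕜) :
    ((A * Aᴴ) ⊙ (B * Bᴴ).map (starRingEnd 𝕜)).PosSemidef := by
  rw [map_conj_mul_conjTranspose_self]
  exact (posSemidef_self_mul_conjTranspose A).hadamard
    (posSemidef_transpose_iff.mpr (posSemidef_self_mul_conjTranspose B))

theorem star_dotProduct_hadamard_map_conj_mulVec [Fintype m] [DecidableEq m]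
    (A : Matrix m n 𝕜) (B : Matrix m p 𝕜) (x : m → 𝕜) :
    star x ⬝ᵥ ((A * Aᴴ) ⊙ (B * Bᴴ).map (starRingEnd 𝕜)) *ᵥ x
      = ((Aᴴ * diagonal x * B)ᴴ * (Aᴴ * diagonal x * B)).trace := by
  rw [dotProduct_mulVec, dotProduct_vecMul_hadamard, map_conj_mul_conjTranspose_self,
    transpose_mul, transpose_transpose, diagonal_transpose]
  simp only [conjTranspose_mul, conjTranspose_conjTranspose, diagonal_conjTranspose,
    Matrix.mul_assoc]
  rw [trace_mul_comm Bᴴ]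
  simp only [Matrix.mul_assoc]

theorem IsHermitian.mulVec_eq_zero_iff {S : Matrix n n 𝕜} (hS : S.IsHermitian) (x : n → 𝕜) :
    S *ᵥ x = 0 ↔ ∀ v, star (S *ᵥ v) ⬝ᵥ x = 0 := by
  have hswap : ∀ v, star (S *ᵥ v) ⬝ᵥ x = star v ⬝ᵥ S *ᵥ x := fun v => by
    rw [star_mulVec, hS.eq, dotProduct_mulVec]
  refine ⟨fun h v => by rw [hswap, h, dotProduct_zero], fun h => ?_⟩
  rw [← dotProduct_star_self_eq_zero, ← hswap]
  exact h _

end Matrix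

theorem sum_sum_ite_ne_eq_zero_iff {ι M : Type*} [Fintype ι] [DecidableEq ι] [AddCommMonoid M]
    [PartialOrder M] [AddLeftMono M] {f : ι → ι → M} (hf : ∀ i j, 0 ≤ f i j) :
    ∑ i, ∑ j, (if i ≠ j then f i j else 0) = 0 ↔ ∀ i j, i ≠ j → f i j = 0 := by
  have hnonneg : ∀ i j, 0 ≤ if i ≠ j then f i j else 0 := fun i j => by
    split_ifs
    exacts [hf i j, le_rfl]
  rw [Fintype.sum_eq_zero_iff_of_nonneg fun i => Fintype.sum_nonneg (hnonneg i)]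
  simp only [funext_iff, Pi.zero_apply, Fintype.sum_eq_zero_iff_of_nonneg (hnonneg _)]
  refine forall_congr' fun i => forall_congr' fun j => ?_
  split_ifs with h <;> simp [h]

/-- If `IL r₀ = 0`, then `IL r = 0` iff `r` has the same signal-subspace
coordinates as `r₀`: `uᴴ r = uᴴ r₀` for every `u` in the column space of `Σ`. -/
theorem zero_IL_iff_signal_coords (K M : ℕ) (d : Fin K → ℕ)
    (F : (k : Fin K) → Matrix (Fin M) (Fin (d k)) ℂ)
    (G : (k : Fin K) → Matrix (Fin M) (Fin (d k)) ℂ)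
    (H : (l k : Fin K) → Matrix (Fin (d k)) (Fin (d l)) ℂ)
    (IL : (Fin M → ℂ) → ℝ)
    (hIL : ∀ r, IL r = ∑ l, ∑ k, if l ≠ k then
      ∑ i, ∑ j, ‖(H l k + (F k)ᴴ * Matrix.diagonal r * G l) i j‖ ^ 2 else 0)
    (Sig : Matrix (Fin M) (Fin M) ℂ)
    (hSig : Sig = ∑ l, ∑ k, if l ≠ k then
      Matrix.hadamard (F k * (F k)ᴴ) ((G l * (G l)ᴴ).map (starRingEnd ℂ)) else 0)
    (r₀ : Fin M → ℂ) (hr₀ : IL r₀ = 0) :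
    ∀ r : Fin M → ℂ,
      IL r = 0 ↔ ∀ v : Fin M → ℂ,
        star (Sig.mulVec v) ⬝ᵥ r = star (Sig.mulVec v) ⬝ᵥ r₀ := by
  intro r
  have hres : ∀ l k, l ≠ k →
      H l k + (F k)ᴴ * diagonal r * G l = (F k)ᴴ * diagonal (r - r₀) * G l := by
    intro l k hlk
    have h₀ : H l k + (F k)ᴴ * diagonal r₀ * G l = 0 :=
      sum_sum_norm_sq_eq_zero_iff.mp <| (sum_sum_ite_ne_eq_zero_iff fun _ _ => by positivity).mp
        ((hIL r₀).symm.trans hr₀) l k hlk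
    rw [show diagonal (r - r₀) = diagonal r - diagonal r₀ from (diagonal_sub r r₀).symm,
      Matrix.mul_sub, Matrix.sub_mul, ← sub_eq_zero, ← h₀]
    abel
  have hquad : (IL r : ℂ) = star (r - r₀) ⬝ᵥ Sig *ᵥ (r - r₀) := by
    simp only [hIL, hSig, sum_mulVec, dotProduct_sum, Complex.ofReal_sum]
    refine Finset.sum_congr rfl fun l _ => Finset.sum_congr rfl fun k _ => ?_
    split_ifs with hlk
    · rw [star_dotProduct_hadamard_map_conj_mulVec, trace_conjTranspose_mul_self_eq_sum_norm_sq,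
        hres l k hlk]
      -- the `RCLike` and `Complex` coercions `ℝ → ℂ` agree definitionally
      rfl
    · simp
  have hSig_psd : Sig.PosSemidef :=
    hSig ▸ posSemidef_sum _ fun l _ => posSemidef_sum _ fun k _ => by
      split_ifs
      exacts [posSemidef_hadamard_map_conj _ _, PosSemidef.zero]
  rw [← Complex.ofReal_eq_zero, hquad, hSig_psd.dotProduct_mulVec_zero_iff,
    hSig_psd.isHermitian.mulVec_eq_zero_iff]
  simp only [dotProduct_sub, sub_eq_zero]
end

section
/- Let Σ ∈ ℂ^{M×M} be Hermitian positive semidefinite and s ∈ ℂ^M. For μ > 0 the matrix Σ + μI is invertible, and the map μ ↦ ‖(Σ + μI)⁻¹.mulVec s‖₂ is antitone on (0, ∞): if 0 < μ₁ ≤ μ₂ then ‖(Σ + μ₂ I)⁻¹.mulVec s‖₂ ≤ ‖(Σ + μ₁ I)⁻¹.mulVec s‖₂. -/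
open Matrix ComplexOrder

/-!
With `x = (Σ + μ₂ I)⁻¹ s` and `c = μ₂ - μ₁ ≥ 0`, the resolvent identity gives
`(Σ + μ₁ I)⁻¹ s = x + c (Σ + μ₁ I)⁻¹ x`. The inverse of a positive definite matrix is positive,
so the cross term `⟪x, (Σ + μ₁ I)⁻¹ x⟫` has nonnegative real part, and expanding the squared
norm of the right-hand side shows that it is at least `‖x‖²`.
-/

section InnerProductSpace

variable {𝕜 E : Type*} [RCLike 𝕜] [NormedAddCommGroup E] [InnerProductSpace 𝕜 E]

theorem norm_le_norm_add_smul_of_re_inner_nonneg {x y : E} {c : ℝ} (hc : 0 ≤ c)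
    (hxy : 0 ≤ RCLike.re (inner 𝕜 x y)) : ‖x‖ ≤ ‖x + (c : 𝕜) • y‖ := by
  refine (pow_le_pow_iff_left₀ (norm_nonneg _) (norm_nonneg _) two_ne_zero).1 ?_
  rw [norm_add_sq (𝕜 := 𝕜), inner_smul_right, RCLike.re_ofReal_mul, norm_smul,
    RCLike.norm_ofReal, abs_of_nonneg hc]
  nlinarith [mul_nonneg hc hxy, sq_nonneg (c * ‖y‖)]

end InnerProductSpace

namespace Matrix

variable {n 𝕜 : Type*} [DecidableEq n] [RCLike 𝕜]

theorem PosSemidef.posDef_add_smul_one {A : Matrix n n 𝕜} (hA : A.PosSemidef) {μ : ℝ}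
    (hμ : 0 < μ) : (A + (μ : 𝕜) • 1).PosDef :=
  PosDef.posSemidef_add hA (PosDef.one.smul (RCLike.ofReal_pos.2 hμ))

variable [Fintype n]

theorem inv_eq_inv_add_smul_one_add_smul_inv_mul_inv {α : Type*} [CommRing α] {A : Matrix n n α}
    {c : α} (hA : IsUnit A) (hB : IsUnit (A + c • 1)) :
    A⁻¹ = (A + c • 1)⁻¹ + c • (A⁻¹ * (A + c • 1)⁻¹) := by
  rw [← sub_eq_iff_eq_add', inv_sub_inv (iff_of_true hA hB), add_sub_cancel_left,
    Matrix.mul_smul, Matrix.mul_one, Matrix.smul_mul]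

theorem PosDef.norm_inv_add_smul_one_mulVec_le {A : Matrix n n 𝕜} (hA : A.PosDef) {c : ℝ}
    (hc : 0 ≤ c) (s : n → 𝕜) :
    ‖WithLp.toLp 2 ((A + (c : 𝕜) • 1)⁻¹ *ᵥ s)‖ ≤ ‖WithLp.toLp 2 (A⁻¹ *ᵥ s)‖ := by
  have hB : (A + (c : 𝕜) • 1).PosDef :=
    hA.add_posSemidef (PosSemidef.one.smul (RCLike.ofReal_nonneg.2 hc))
  set x := (A + (c : 𝕜) • 1)⁻¹ *ᵥ s
  have hx : 0 ≤ RCLike.re (inner 𝕜 (WithLp.toLp 2 x) (WithLp.toLp 2 (A⁻¹ *ᵥ x))) := by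
    rw [EuclideanSpace.inner_toLp_toLp, dotProduct_comm]
    exact (RCLike.nonneg_iff.1 (hA.posSemidef.inv.dotProduct_mulVec_nonneg x)).1
  rw [inv_eq_inv_add_smul_one_add_smul_inv_mul_inv hA.isUnit hB.isUnit, add_mulVec, smul_mulVec,
    ← mulVec_mulVec, WithLp.toLp_add, WithLp.toLp_smul]
  exact norm_le_norm_add_smul_of_re_inner_nonneg hc hx

end Matrix

/-- For a Hermitian positive semidefinite `Σ` and `μ > 0`, the matrix `Σ + μI` is
invertible, and `μ ↦ ‖(Σ + μI)⁻¹ s‖₂` is antitone on `(0, ∞)`. -/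
theorem regularized_norm_antitone (M : ℕ) (Sig : Matrix (Fin M) (Fin M) ℂ)
    (hSig : Sig.PosSemidef) (s : Fin M → ℂ) :
    (∀ μ : ℝ, 0 < μ →
      IsUnit (Sig + (μ : ℂ) • (1 : Matrix (Fin M) (Fin M) ℂ))) ∧
    (∀ μ₁ μ₂ : ℝ, 0 < μ₁ → μ₁ ≤ μ₂ →
      Real.sqrt (∑ m, ‖((Sig + (μ₂ : ℂ) • (1 : Matrix (Fin M) (Fin M) ℂ))⁻¹).mulVec s m‖ ^ 2)
        ≤ Real.sqrt (∑ m, ‖((Sig + (μ₁ : ℂ) • (1 : Matrix (Fin M) (Fin M) ℂ))⁻¹).mulVec s m‖ ^ 2)) := by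
  refine ⟨fun μ hμ => (hSig.posDef_add_smul_one hμ).isUnit, fun μ₁ μ₂ hμ₁ h12 => ?_⟩
  have hsplit : Sig + (μ₂ : ℂ) • (1 : Matrix (Fin M) (Fin M) ℂ) =
      Sig + (μ₁ : ℂ) • 1 + ((μ₂ - μ₁ : ℝ) : ℂ) • 1 := by
    push_cast
    module
  have hmono :=
    (hSig.posDef_add_smul_one hμ₁).norm_inv_add_smul_one_mulVec_le (sub_nonneg.2 h12) s
  rw [EuclideanSpace.norm_eq, EuclideanSpace.norm_eq] at hmono
  -- not `simpa`: the `RCLike.ofReal` casts above agree with `Complex.ofReal` only up to unfolding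
  rwa [hsplit]
end
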